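/- arXiv:2410.14750 — 7 statements merged into one kernel-verified Lean document; each statement's English description precedes it below -/
import Mathlib

section
/- Let F be a field with card(F) ≤ 𝔠. Then ICF holds if and only if for all F-vector spaces V and W, if the dual spaces V* = Hom_F(V,F) and W* = Hom_F(W,F) are isomorphic as F-vector spaces, then V and W are isomorphic as F-vector spaces. -/
universe u

open Cardinal Module


lemma two_pow_of_card_le (F : Type u) [Field F] (hF : #F ≤ Cardinal.continuum)
    {κ : Cardinal.{u}} (hκ : ℵ₀ ≤ κ) : (#F : Cardinal) ^ κ = 2 ^ κ := by
  apply le_antisymm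
  · calc (#F : Cardinal) ^ κ ≤ (2 ^ ℵ₀) ^ κ := by
          exact power_le_power_right (by rwa [Cardinal.two_power_aleph0])
        _ = 2 ^ (ℵ₀ * κ) := by rw [← power_mul]
        _ = 2 ^ κ := by rw [Cardinal.aleph0_mul_eq hκ]
  · exact power_le_power_right (Cardinal.two_le_iff.mpr ⟨0, 1, zero_ne_one⟩)

lemma dual_rank_infinite (F : Type u) [Field F] (hF : #F ≤ Cardinal.continuum)
    (V : Type u) [AddCommGroup V] [Module F V] (h : ℵ₀ ≤ Module.rank F V) :
    Module.rank F (Module.Dual F V) = 2 ^ Module.rank F V := by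
  obtain ⟨⟨ι, b⟩⟩ := Module.Free.exists_basis (R := F) (M := V)
  have hκ : #ι = Module.rank F V := b.mk_eq_rank''
  rw [rank_dual_eq_card_dual_of_aleph0_le_rank h]
  have e : Module.Dual F V ≃ (ι → F) := (b.constr ℕ (M' := F)).toEquiv.symm
  rw [e.cardinal_eq, Cardinal.mk_arrow, Cardinal.lift_id, Cardinal.lift_id, hκ,
    two_pow_of_card_le F hF h]

lemma dual_rank_finite (F : Type u) [Field F] (V : Type u) [AddCommGroup V] [Module F V]
    (h : Module.rank F V < ℵ₀) :
    Module.rank F (Module.Dual F V) = Module.rank F V := by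
  haveI : Module.Finite F V := Module.rank_lt_aleph0_iff.mp h
  haveI := (Basis.finite_ofVectorSpaceIndex_of_rank_lt_aleph0 h).to_subtype
  classical exact ((Basis.ofVectorSpace F V).toDualEquiv.symm).rank_eq


/-- Let `F` be a field with `card F ≤ 𝔠`. Then the Injective Continuum
Function hypothesis (`2^κ = 2^λ → κ = λ`) holds if and only if any two `F`-vector spaces
with isomorphic duals are isomorphic. -/
theorem icf_iff_dual_determines_vector_spaces (F : Type u) [Field F]
    (hF : Cardinal.mk F ≤ Cardinal.continuum) :
    (∀ κ μ : Cardinal.{u}, (2 : Cardinal) ^ κ = 2 ^ μ → κ = μ) ↔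
      (∀ (V W : Type u) [AddCommGroup V] [AddCommGroup W] [Module F V] [Module F W],
        Nonempty (Module.Dual F V ≃ₗ[F] Module.Dual F W) → Nonempty (V ≃ₗ[F] W)) := by
  constructor
  · intro icf V W _ _ _ _ ⟨e⟩
    have hr : Module.rank F (Module.Dual F V) = Module.rank F (Module.Dual F W) := e.rank_eq
    suffices h : Module.rank F V = Module.rank F W from nonempty_linearEquiv_of_rank_eq h
    rcases lt_or_ge (Module.rank F V) ℵ₀ with hV | hV <;>
      rcases lt_or_ge (Module.rank F W) ℵ₀ with hW | hW
    · rw [← dual_rank_finite F V hV, ← dual_rank_finite F W hW, hr]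
    · refine absurd hr (ne_of_lt ?_)
      calc Module.rank F (Module.Dual F V) = Module.rank F V := dual_rank_finite F V hV
        _ < ℵ₀ := hV
        _ ≤ 2 ^ Module.rank F W := hW.trans (Cardinal.cantor _).le
        _ = Module.rank F (Module.Dual F W) := (dual_rank_infinite F hF W hW).symm
    · refine absurd hr.symm (ne_of_lt ?_)
      calc Module.rank F (Module.Dual F W) = Module.rank F W := dual_rank_finite F W hW
        _ < ℵ₀ := hW
        _ ≤ 2 ^ Module.rank F V := hV.trans (Cardinal.cantor _).le
        _ = Module.rank F (Module.Dual F V) := (dual_rank_infinite F hF V hV).symm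
    · exact icf _ _ (by rw [← dual_rank_infinite F hF V hV, ← dual_rank_infinite F hF W hW, hr])
  · intro h κ μ hpow
    rcases lt_or_ge κ ℵ₀ with hκ | hκ <;> rcases lt_or_ge μ ℵ₀ with hμ | hμ
    · obtain ⟨m, rfl⟩ := Cardinal.lt_aleph0.mp hκ
      obtain ⟨n, rfl⟩ := Cardinal.lt_aleph0.mp hμ
      have : ((2 ^ m : ℕ) : Cardinal.{u}) = ((2 ^ n : ℕ) : Cardinal.{u}) := by push_cast; exact_mod_cast hpow
      have hmn : m = n := Nat.pow_right_injective le_rfl (Nat.cast_injective this)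
      exact congrArg (Nat.cast (R := Cardinal.{u})) hmn
    · exact absurd (hpow ▸ (hμ.trans (Cardinal.cantor μ).le))
        (not_le.mpr (Cardinal.power_lt_aleph0 (by exact_mod_cast Cardinal.nat_lt_aleph0 2) hκ))
    · exact absurd (hpow ▸ (hκ.trans (Cardinal.cantor κ).le))
        (not_le.mpr (Cardinal.power_lt_aleph0 (by exact_mod_cast Cardinal.nat_lt_aleph0 2) hμ))
    · set V := κ.out →₀ F
      set W := μ.out →₀ F
      have hrV : Module.rank F V = κ := by rw [rank_finsupp_self', Cardinal.mk_out]
      have hrW : Module.rank F W = μ := by rw [rank_finsupp_self', Cardinal.mk_out]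
      have hdual : Module.rank F (Module.Dual F V) = Module.rank F (Module.Dual F W) := by
        rw [dual_rank_infinite F hF V (by rw [hrV]; exact hκ), dual_rank_infinite F hF W (by rw [hrW]; exact hμ), hrV, hrW, hpow]
      haveI : Module.Free F (Module.Dual F V) := Module.Free.of_divisionRing F _
      haveI : Module.Free F (Module.Dual F W) := Module.Free.of_divisionRing F _
      obtain ⟨e⟩ := h V W (nonempty_linearEquiv_of_rank_eq hdual)
      rw [← hrV, ← hrW, e.rank_eq]
end

section
/- Let F be a field with card(F) ≤ 𝔠 and let V be an F-vector space of infinite dimension λ. Then the dual space V* = Hom_F(V, F) has dimension dim_F(V*) = 2^λ. -/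
universe u

/-- Let `F` be a field with `card F ≤ 𝔠` and let `V` be an `F`-vector space
of infinite dimension `λ`. Then the dual space `V* = Hom_F(V, F)` has dimension `2^λ`. -/
theorem rank_dual_eq_two_pow_of_card_le_continuum (F : Type u) [Field F]
    (hF : Cardinal.mk F ≤ Cardinal.continuum)
    (V : Type u) [AddCommGroup V] [Module F V] (lam : Cardinal.{u})
    (hlam : Cardinal.aleph0 ≤ lam) (hdim : Module.rank F V = lam) :
    Module.rank F (Module.Dual F V) = 2 ^ lam := by
  have hr : Cardinal.aleph0 ≤ Module.rank F V := by rw [hdim]; exact hlam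
  have h := rank_dual_eq_card_dual_of_aleph0_le_rank (K := F) (V := V) hr
  obtain ⟨⟨ι, b⟩⟩ := Module.Free.exists_basis (R := F) (M := V)
  have hι : Cardinal.mk ι = lam := by rw [b.mk_eq_rank'', hdim]
  have e : (V →ₗ[F] F) ≃ₗ[F] (ι → F) := (b.constr F (M' := F)).symm
  have hcard : Cardinal.mk (V →ₗ[F] F) = Cardinal.mk F ^ lam := by
    rw [e.toEquiv.cardinal_eq, ← Cardinal.power_def, hι]
  have key : Cardinal.mk F ^ lam = 2 ^ lam := by
    apply le_antisymm
    · calc Cardinal.mk F ^ lam ≤ Cardinal.continuum ^ lam :=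
            Cardinal.power_le_power_right hF
        _ = (2 ^ Cardinal.aleph0) ^ lam := by rw [Cardinal.two_power_aleph0]
        _ = 2 ^ (Cardinal.aleph0 * lam) := by rw [← Cardinal.power_mul]
        _ = 2 ^ lam := by rw [Cardinal.aleph0_mul_eq hlam]
    · exact Cardinal.power_le_power_right
        (Cardinal.two_le_iff.mpr ⟨0, 1, zero_ne_one⟩)
  show Module.rank F (V →ₗ[F] F) = 2 ^ lam
  rw [h, hcard, key]
end

section
/- Let F be a field such that card(F) = 2^λ for some cardinal λ ≥ 𝔠. Then the F-vector spaces F^ℵ₀ and F^𝔠 (products indexed by ℵ₀ and by 𝔠) are isomorphic as F-vector spaces, although the direct sums F^[ℵ₀] and F^[𝔠] are not isomorphic. In particular, there exist F-vector spaces V and W whose duals are isomorphic while V and W are not isomorphic. -/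
universe u

open Cardinal

/-- Dual of `ι →₀ F` is `ι → F`. -/
noncomputable def dualFinsuppEquiv (F : Type u) [Field F] (ι : Type u) :
    Module.Dual F (ι →₀ F) ≃ₗ[F] (ι → F) :=
  (Finsupp.lsum (R := F) (M := F) (N := F) (α := ι) F).symm.trans
    (LinearEquiv.piCongrRight fun _ => LinearMap.ringLmapEquivSelf F F F)

/-- Let `F` be a field with `card F = 2^λ` for some cardinal `λ ≥ 𝔠`. Then
the `F`-vector spaces `F^ℵ₀` and `F^𝔠` (products indexed by a countably infinite set and by
a set of cardinality `𝔠`) are isomorphic, although the direct sums `F^[ℵ₀]` and `F^[𝔠]` are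
not isomorphic. In particular, there exist `F`-vector spaces `V` and `W` whose duals are
isomorphic while `V` and `W` are not isomorphic. -/
theorem exists_nonIsomorphic_with_isomorphic_duals (F : Type u) [Field F]
    (lam : Cardinal.{u}) (hlam : Cardinal.continuum ≤ lam)
    (hF : Cardinal.mk F = 2 ^ lam) :
    Nonempty ((ULift.{u} ℕ → F) ≃ₗ[F] (Set (ULift.{u} ℕ) → F)) ∧
    ¬ Nonempty ((ULift.{u} ℕ →₀ F) ≃ₗ[F] (Set (ULift.{u} ℕ) →₀ F)) ∧
    ∃ (V W : Type u) (_ : AddCommGroup V) (_ : AddCommGroup W) (_ : Module F V)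
      (_ : Module F W),
      Nonempty (Module.Dual F V ≃ₗ[F] Module.Dual F W) ∧ ¬ Nonempty (V ≃ₗ[F] W) := by
  have haleph : ℵ₀ ≤ lam := aleph0_le_continuum.trans hlam
  have hmkN : #(ULift.{u} ℕ) = ℵ₀ := by simp
  have hmkS : #(Set (ULift.{u} ℕ)) = continuum.{u} := by
    rw [mk_set, hmkN]; rfl
  have h1 : #(ULift.{u} ℕ → F) = 2 ^ lam := by
    rw [mk_arrow, hmkN, hF, lift_id, lift_aleph0, ← power_mul, mul_aleph0_eq haleph]
  have h2 : #(Set (ULift.{u} ℕ) → F) = 2 ^ lam := by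
    rw [mk_arrow, hmkS, hF, lift_id, lift_continuum, ← power_mul,
      mul_eq_left haleph hlam continuum_ne_zero]
  have hr1 : Module.rank F (ULift.{u} ℕ → F) = 2 ^ lam := by
    rw [rank_fun_infinite, h1]
  have hr2 : Module.rank F (Set (ULift.{u} ℕ) → F) = 2 ^ lam := by
    rw [rank_fun_infinite, h2]
  have hiso : Nonempty ((ULift.{u} ℕ → F) ≃ₗ[F] (Set (ULift.{u} ℕ) → F)) := by
    rw [LinearEquiv.nonempty_equiv_iff_rank_eq, hr1, hr2]
  have hniso : ¬ Nonempty ((ULift.{u} ℕ →₀ F) ≃ₗ[F] (Set (ULift.{u} ℕ) →₀ F)) := by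
    rw [LinearEquiv.nonempty_equiv_iff_rank_eq, rank_finsupp_self', rank_finsupp_self',
      hmkN, hmkS]
    exact (aleph0_lt_continuum).ne
  refine ⟨hiso, hniso, ULift.{u} ℕ →₀ F, Set (ULift.{u} ℕ) →₀ F, inferInstance, inferInstance,
    inferInstance, inferInstance, ?_, hniso⟩
  obtain ⟨e⟩ := hiso
  exact ⟨(dualFinsuppEquiv F _).trans (e.trans (dualFinsuppEquiv F _).symm)⟩
end

section
/- Let F be a finite field and K a field with card(K) > 𝔠, and set R = F × K. Then R is an Artinian commutative ring for which the R-module R^ℕ is not free. In particular, there exists an Artinian commutative ring R such that R^ℕ is not a free R-module. -/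
/-!
A basis `b` of `(F × K)^ℕ` over `F × K` splits into its two coordinate families: the
`F`-parts of `b` are linearly independent in `F^ℕ`, and the `K`-parts span `K^ℕ`. So the
basis has at most `#(F^ℕ) ≤ 𝔠` elements and at least `dim_K K^ℕ ≥ #K > 𝔠` elements
(Erdős–Kaplansky), which is absurd.
-/

universe u

open Cardinal

namespace Module.Basis

variable {A B ι α : Type*} [Ring A] [Ring B] (b : Basis ι (A × B) (α → A × B))

theorem linearIndependent_fst_pi : LinearIndependent A (fun i a => (b i a).1) := by
  rw [linearIndependent_iff']
  intro s g hg i hi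
  have hb : ∑ j ∈ s, ((g j, 0) : A × B) • b j = 0 := by
    funext a
    have := congrFun hg a
    ext <;> simp_all [Finset.sum_apply, Prod.fst_sum, Prod.snd_sum]
  simpa using linearIndependent_iff'.mp b.linearIndependent s _ hb i hi

theorem span_snd_pi_eq_top : Submodule.span B (Set.range fun i a => (b i a).2) = ⊤ := by
  let π : (α → A × B) →ₛₗ[RingHom.snd A B] (α → B) :=
    { toFun := fun m a => (m a).2
      map_add' := fun _ _ => rfl
      map_smul' := fun _ _ => rfl }
  have hπ : Function.Surjective π := fun w => ⟨fun a => (0, w a), rfl⟩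
  have hrange : (Set.range fun i a => (b i a).2) = π '' Set.range b := by
    rw [← Set.range_comp]; rfl
  rw [hrange, ← Submodule.map_span, b.span_eq, Submodule.map_top, LinearMap.range_eq_top.mpr hπ]

end Module.Basis

theorem Cardinal.mk_nat_arrow_le_continuum (F : Type u) [Finite F] : #(ℕ → F) ≤ 𝔠 := by
  rw [mk_arrow, mk_nat, lift_aleph0, ← continuum_power_aleph0]
  exact power_le_power_right (lift_le_continuum.mpr (mk_le_aleph0.trans aleph0_le_continuum))

theorem not_free_pi_nat_prod_of_card_lt {A K : Type u} [Ring A] [Nontrivial A] [DivisionRing K]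
    (h : #(ℕ → A) < #K) : ¬ Module.Free (A × K) (ℕ → A × K) := by
  intro _
  let b := Module.Free.chooseBasis (A × K) (ℕ → A × K)
  have hK : #K ≤ #(Module.Free.ChooseBasisIndex (A × K) (ℕ → A × K)) :=
    calc #K ≤ max ℵ₀ #K := le_max_right _ _
      _ ≤ Module.rank K (ℕ → K) := max_aleph0_card_le_rank_fun_nat K
      _ = Module.rank K (Submodule.span K (Set.range fun i n => (b i n).2)) := by
        rw [b.span_snd_pi_eq_top, rank_top]
      _ ≤ _ := (rank_span_le _).trans mk_range_le
  exact (hK.trans (mk_le_of_injective b.linearIndependent_fst_pi.injective)).not_gt h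

/-- Let `F` be a finite field and `K` a field with `card K > 𝔠`, and set
`R = F × K`. Then `R` is an Artinian commutative ring for which the `R`-module `R^ℕ` is not
free. In particular, there exists an Artinian commutative ring `R` such that `R^ℕ` is not a
free `R`-module. -/
theorem exists_artinian_with_pi_not_free (F K : Type u) [Field F] [Finite F] [Field K]
    (hK : Cardinal.continuum < Cardinal.mk K) :
    IsArtinianRing (F × K) ∧ ¬ Module.Free (F × K) (ℕ → F × K) ∧
    ∃ (R : Type u) (_ : CommRing R), IsArtinianRing R ∧ ¬ Module.Free R (ℕ → R) := by
  have hnot_free : ¬ Module.Free (F × K) (ℕ → F × K) :=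
    not_free_pi_nat_prod_of_card_lt ((mk_nat_arrow_le_continuum F).trans_lt hK)
  exact ⟨inferInstance, hnot_free, F × K, inferInstance, inferInstance, hnot_free⟩
end

section
/- Let R be a Noetherian commutative integral domain that is not a local ring. Then R is half-slender: every R-linear map F : R^ℕ → R satisfying F(e_n) = 0 for all n ∈ ℕ is the zero map. -/
universe u

/-- Key lemma: if `F` kills all `e n` and `a` is a nonunit, then `F (fun k => a^k * c k) = 0`. -/
theorem aux_geom_kill {R : Type u} [CommRing R] [IsDomain R] [IsNoetherianRing R]
    (F : (ℕ → R) →ₗ[R] R) (hF : ∀ n : ℕ, F (Pi.single n 1) = 0)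
    (a : R) (ha : ¬ IsUnit a) (c : ℕ → R) : F (fun k => a ^ k * c k) = 0 := by
  have hmem : ∀ n : ℕ, F (fun k => a ^ k * c k) ∈ Ideal.span {a} ^ n := by
    intro n
    set w : ℕ → R := fun k => if k < n then 0 else a ^ (k - n) * c k with hw
    have hdecomp : (fun k => a ^ k * c k) =
        (∑ k ∈ Finset.range n, (a ^ k * c k) • (Pi.single k (1 : R) : ℕ → R)) + a ^ n • w := by
      funext k
      by_cases hk : k < n
      · simp only [Pi.add_apply, Finset.sum_apply, Pi.smul_apply, smul_eq_mul, hw]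
        rw [if_pos hk]
        rw [Finset.sum_eq_single k]
        · simp
        · intro b _ hb; simp [Pi.single_apply, hb.symm]
        · intro hk'; exact absurd (Finset.mem_range.mpr hk) hk'
      · simp only [Pi.add_apply, Finset.sum_apply, Pi.smul_apply, smul_eq_mul, hw]
        rw [if_neg hk]
        rw [Finset.sum_eq_zero, zero_add, ← mul_assoc, ← pow_add]
        · congr 2; omega
        · intro b hb
          have : b ≠ k := by intro h; exact hk (h ▸ Finset.mem_range.mp hb)
          simp [Pi.single_apply, this]
    rw [hdecomp, map_add, map_sum, map_smul]
    have : ∀ k ∈ Finset.range n, F ((a ^ k * c k) • (Pi.single k (1 : R) : ℕ → R)) = 0 := by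
      intro k _; rw [map_smul, hF, smul_zero]
    rw [Finset.sum_eq_zero this, zero_add, smul_eq_mul]
    rw [Ideal.span_singleton_pow]
    exact Ideal.mem_span_singleton.mpr ⟨F w, rfl⟩
  have hproper : Ideal.span {a} ≠ ⊤ := fun h' => ha (Ideal.span_singleton_eq_top.mp h')
  have hbot : (⨅ n : ℕ, Ideal.span {a} ^ n) = ⊥ :=
    Ideal.iInf_pow_eq_bot_of_isDomain _ hproper
  have : F (fun k => a ^ k * c k) ∈ (⨅ n : ℕ, Ideal.span {a} ^ n) :=
    Ideal.mem_iInf.mpr hmem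
  rw [hbot] at this
  exact this

/-- Let `R` be a Noetherian commutative integral domain that is not a
local ring. Then `R` is *half-slender*: every `R`-linear map `F : R^ℕ → R` satisfying
`F (e n) = 0` for all `n : ℕ` (where `e n = Pi.single n 1`) is the zero map. -/
theorem halfSlender_of_nonLocal_domain (R : Type u) [CommRing R] [IsDomain R]
    [IsNoetherianRing R] (hR : ¬ IsLocalRing R) :
    ∀ F : (ℕ → R) →ₗ[R] R, (∀ n : ℕ, F (Pi.single n 1) = 0) → F = 0 := by
  intro F hF
  obtain ⟨a, b, hab, ha, hb⟩ : ∃ a b : R, a + b = 1 ∧ ¬ IsUnit a ∧ ¬ IsUnit b := by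
    by_contra h
    push_neg at h
    refine hR (IsLocalRing.of_isUnit_or_isUnit_of_isUnit_add ?_)
    intro a b hab
    obtain ⟨u, hu⟩ := hab
    have h1 : a * (↑u⁻¹ : R) + b * (↑u⁻¹ : R) = 1 := by
      rw [← add_mul, ← hu, Units.mul_inv]
    by_cases ha : IsUnit (a * (↑u⁻¹ : R))
    · exact Or.inl (isUnit_of_mul_isUnit_left ha)
    · exact Or.inr (isUnit_of_mul_isUnit_left (h _ _ h1 ha))
  have hcop : IsCoprime a b := ⟨1, 1, by linear_combination hab⟩
  ext x
  -- for each k, a^k and b^k are coprime, so x k = a^k * s k + b^k * t k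
  have hk : ∀ k : ℕ, ∃ s t : R, a ^ k * s + b ^ k * t = x k := by
    intro k
    obtain ⟨u, v, huv⟩ := (hcop.pow (n := k) (m := k))
    exact ⟨u * x k, v * x k, by ring_nf; linear_combination x k * huv⟩
  choose s t hst using hk
  have hx : x = (fun k => a ^ k * s k) + fun k => b ^ k * t k := by
    funext k; simp [← hst k]
  rw [LinearMap.zero_apply, hx, map_add,
    aux_geom_kill F hF a ha s, aux_geom_kill F hF b hb t, add_zero]
end

section
/- Let T be an Artinian commutative ring and let R be a finitely generated commutative T-algebra (an affine T-algebra). If R is an integral domain that is not a field, then R is slender. -/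
universe u v

/-- A commutative ring `R` is *slender* if for every `R`-linear map `f : R^ℕ → R` the set
`{n : ℕ | f (e n) ≠ 0}` is finite, where `e n = Pi.single n 1` is the `n`-th standard
"basis" vector of `R^ℕ`. -/
def IsSlenderRing (R : Type u) [CommRing R] : Prop :=
  ∀ f : (ℕ → R) →ₗ[R] R, {n : ℕ | f (Pi.single n 1) ≠ 0}.Finite

/-!
Suppose `f : R^ℕ → R` is linear; after passing to a subsequence we may assume `f (e j) ≠ 0` for
all `j`. The ring `R` is noetherian, so by Krull's intersection theorem a nonzero nonunit `a` is
`a`-adically separated, and exponents `k 0 ≤ k 1 ≤ ⋯` can be chosen with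
`a ^ k (j + 1) ∤ a ^ k j * f (e j)`. As all coordinates of `x` beyond `N` are divisible by
`a ^ k N`, linearity gives `f x ≡ ∑ j < N, x j * f (e j) [mod a ^ k N]`; looking at the first
nonzero `c j` shows that `c ↦ f (c j • a ^ k j)ⱼ` embeds `K^ℕ` linearly into `R`, where `K` is the
image of `T` in `R`, an artinian domain and hence a field. This is impossible, since `K^ℕ` has
uncountable dimension over `K` (Erdős–Kaplansky) while `R`, of finite type over `K`, has
countable dimension.
-/

open Cardinal

theorem Function.Injective.extend_single {ι η M : Type*} [DecidableEq ι] [DecidableEq η]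
    [Zero M] {g : ι → η} (hg : g.Injective) (i : ι) (m : M) :
    Function.extend g (Pi.single i m) 0 = Pi.single (g i) m := by
  funext n
  by_cases hn : ∃ j, g j = n
  · obtain ⟨j, rfl⟩ := hn
    simp [hg.extend_apply, Pi.single_apply, hg.eq_iff]
  · rw [Function.extend_apply' _ _ _ hn, Pi.single_apply, if_neg fun h => hn ⟨i, h.symm⟩]
    rfl

theorem Algebra.surjective_algebraMap_bot (T R : Type*) [CommSemiring T] [Semiring R]
    [Algebra T R] : Function.Surjective (algebraMap T (⊥ : Subalgebra T R)) := by
  rintro ⟨x, hx⟩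
  obtain ⟨t, rfl⟩ := Algebra.mem_bot.mp hx
  exact ⟨t, rfl⟩

theorem Algebra.isField_bot_of_isArtinianRing (T R : Type*) [CommRing T] [IsArtinianRing T]
    [CommRing R] [IsDomain R] [Algebra T R] : IsField (⊥ : Subalgebra T R) :=
  have : IsArtinianRing (⊥ : Subalgebra T R) :=
    isArtinian_of_tower T <|
      isArtinian_of_surjective _ (Algebra.linearMap T _) (surjective_algebraMap_bot T R)
  IsArtinianRing.isField_of_isDomain _

theorem Algebra.FiniteType.rank_le_aleph0 (K : Type v) (R : Type u) [CommRing K] [Nontrivial K]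
    [CommRing R] [Algebra K R] [Algebra.FiniteType K R] : Module.rank K R ≤ ℵ₀ := by
  obtain ⟨n, π, hπ⟩ := Algebra.FiniteType.iff_quotient_mvPolynomial''.mp ‹_›
  rw [← lift_le_aleph0.{u, v}]
  refine (π.toLinearMap.lift_rank_le_of_surjective hπ).trans ?_
  rw [lift_le_aleph0, MvPolynomial.rank_eq_lift, lift_le_aleph0]
  exact mk_le_aleph0

theorem aleph0_lt_rank_fun_nat (K : Type*) [DivisionRing K] : ℵ₀ < Module.rank K (ℕ → K) := by
  rw [rank_fun_infinite]
  calc ℵ₀ < 2 ^ ℵ₀ := cantor _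
    _ ≤ #K ^ ℵ₀ := power_le_power_right (two_le_iff.mpr ⟨0, 1, zero_ne_one⟩)
    _ = #(ℕ → K) := by simp

section Congruence

variable {R : Type*} [CommRing R]

theorem LinearMap.dvd_apply_of_forall_dvd {ι : Type*} (f : (ι → R) →ₗ[R] R) {c : R}
    {x : ι → R} (h : ∀ i, c ∣ x i) : c ∣ f x := by
  choose y hy using h
  rw [show x = c • y from funext hy, map_smul, smul_eq_mul]
  exact dvd_mul_right c _

theorem LinearMap.dvd_apply_sub_sum_of_dvd (f : (ℕ → R) →ₗ[R] R) {c : R} {x : ℕ → R} {N : ℕ}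
    (h : ∀ n, N ≤ n → c ∣ x n) :
    c ∣ f x - ∑ n ∈ Finset.range N, x n * f (Pi.single n 1) := by
  have hlin : f x - ∑ n ∈ Finset.range N, x n * f (Pi.single n 1) =
      f (x - ∑ n ∈ Finset.range N, x n • Pi.single n 1) := by
    simp [map_sub, map_sum, map_smul]
  rw [hlin]
  refine f.dvd_apply_of_forall_dvd fun m => ?_
  by_cases hm : m < N
  · simp [Finset.sum_apply, Pi.single_apply, hm]
  · simpa [Finset.sum_apply, Pi.single_apply, hm] using h m (not_lt.mp hm)

theorem LinearMap.injective_restrictScalars_comp_pi_smulRight_pow {K : Type*} [Field K]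
    [Algebra K R] (f : (ℕ → R) →ₗ[R] R) {a : R} {k : ℕ → ℕ} (hk : Monotone k)
    (hdvd : ∀ j, ¬ a ^ k (j + 1) ∣ a ^ k j * f (Pi.single j 1)) :
    Function.Injective (f.restrictScalars K ∘ₗ
      LinearMap.pi fun j => (LinearMap.proj j : (ℕ → K) →ₗ[K] K).smulRight (a ^ k j)) := by
  rw [injective_iff_map_eq_zero]
  intro c hc
  suffices ∀ j, c j = 0 from funext this
  intro j
  induction j using Nat.strong_induction_on with
  | _ j ih =>
  by_contra hcj
  have hcong := f.dvd_apply_sub_sum_of_dvd (c := a ^ k (j + 1))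
    (x := fun n => c n • a ^ k n) (N := j + 1) fun n hn => by
      rw [Algebra.smul_def]
      exact (pow_dvd_pow a (hk hn)).mul_left _
  have hx : f (fun n => c n • a ^ k n) = 0 := hc
  have hsum : ∑ n ∈ Finset.range (j + 1), (c n • a ^ k n) * f (Pi.single n 1) =
      algebraMap K R (c j) * (a ^ k j * f (Pi.single j 1)) := by
    rw [Finset.sum_range_succ, Finset.sum_eq_zero fun n hn => by
      rw [ih n (Finset.mem_range.mp hn), zero_smul, zero_mul], zero_add, Algebra.smul_def,
      mul_assoc]
  rw [hx, hsum, zero_sub, dvd_neg,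
    ((isUnit_iff_ne_zero.mpr hcj).map (algebraMap K R)).dvd_mul_left] at hcong
  exact hdvd j hcong

theorem exists_monotone_not_pow_dvd_mul [IsDomain R] {a : R} (ha : a ≠ 0)
    (hsep : ⨅ n : ℕ, Ideal.span {a} ^ n = ⊥) {d : ℕ → R} (hd : ∀ j, d j ≠ 0) :
    ∃ k : ℕ → ℕ, Monotone k ∧ ∀ j, ¬ a ^ k (j + 1) ∣ a ^ k j * d j := by
  have hstep : ∀ j m, ∃ m', m ≤ m' ∧ ¬ a ^ m' ∣ a ^ m * d j := by
    intro j m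
    have hne : a ^ m * d j ≠ 0 := mul_ne_zero (pow_ne_zero m ha) (hd j)
    obtain ⟨N, hN⟩ : ∃ N : ℕ, ¬ a ^ N ∣ a ^ m * d j := by
      by_contra! hall
      refine hne ((Submodule.eq_bot_iff _).mp hsep _ ?_)
      simpa [Ideal.mem_iInf, Ideal.span_singleton_pow, Ideal.mem_span_singleton] using hall
    exact ⟨max m N, le_max_left m N,
      fun hdvd => hN ((pow_dvd_pow a (le_max_right m N)).trans hdvd)⟩
  choose next hle hnext using hstep
  let k : ℕ → ℕ := fun j => Nat.rec 0 next j
  exact ⟨k, monotone_nat_of_le_succ fun j => hle j (k j), fun j => hnext j (k j)⟩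

end Congruence

namespace IsSlenderRing

variable {R : Type u} [CommRing R]

theorem of_forall_exists_map_single_eq_zero
    (h : ∀ f : (ℕ → R) →ₗ[R] R, ∃ n, f (Pi.single n 1) = 0) : IsSlenderRing R := by
  intro f
  by_contra hinf
  let g : ℕ ↪ {n | f (Pi.single n 1) ≠ 0} := Set.Infinite.natEmbedding _ hinf
  have hg : Function.Injective fun n => (g n : ℕ) := Subtype.val_injective.comp g.injective
  obtain ⟨n, hn⟩ := h (f ∘ₗ Function.ExtendByZero.linearMap R fun n => (g n : ℕ))
  change f (Function.extend _ (Pi.single n 1) 0) = 0 at hn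
  exact (g n).2 (by rwa [hg.extend_single] at hn)

theorem of_rank_le_aleph0 [IsDomain R] (K : Type v) [Field K] [Algebra K R]
    (hrank : Module.rank K R ≤ ℵ₀) {a : R} (ha : a ≠ 0)
    (hsep : ⨅ n : ℕ, Ideal.span {a} ^ n = ⊥) : IsSlenderRing R := by
  refine of_forall_exists_map_single_eq_zero fun f => ?_
  by_contra! hd
  obtain ⟨k, hk, hdvd⟩ := exists_monotone_not_pow_dvd_mul ha hsep hd
  have hembed := LinearMap.lift_rank_le_of_injective _
    (f.injective_restrictScalars_comp_pi_smulRight_pow (K := K) hk hdvd)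
  have huncountable := lift_strictMono.{v, u} (aleph0_lt_rank_fun_nat K)
  rw [lift_aleph0] at huncountable
  exact (huncountable.trans_le (hembed.trans (lift_le_aleph0.mpr hrank))).false

end IsSlenderRing

/-- Let `T` be an Artinian commutative ring and let `R` be a finitely
generated commutative `T`-algebra (an affine `T`-algebra). If `R` is an integral domain
that is not a field, then `R` is slender. -/
theorem slender_of_affine_domain_over_artinian (T : Type u) (R : Type u) [CommRing T]
    [IsArtinianRing T] [CommRing R] [Algebra T R] [Algebra.FiniteType T R] [IsDomain R]
    (hR : ¬ IsField R) : IsSlenderRing R := by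
  have : IsNoetherianRing R := Algebra.FiniteType.isNoetherianRing T R
  obtain ⟨a, ha, hau⟩ := Ring.exists_not_isUnit_of_not_isField hR
  have hsep := Ideal.iInf_pow_eq_bot_of_isDomain _ (Ideal.span_singleton_ne_top hau)
  let K := (⊥ : Subalgebra T R)
  let : Field K := (Algebra.isField_bot_of_isArtinianRing T R).toField
  have : Algebra.FiniteType K R := .of_restrictScalars_finiteType T K R
  exact .of_rank_le_aleph0 K (Algebra.FiniteType.rank_le_aleph0 K R) ha hsep
end

section
/- Let R be a commutative integral domain and λ an infinite cardinal (index set). Then every maximal R-linearly independent subset S of R^λ has cardinality card(S) = card(R^λ). (Equivalently, the Lazarus dimension, and hence the Goldie dimension, of R^λ equals its cardinality.) -/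
/-!
A maximal independent set `S` spans `R^ι` up to torsion: every `x` has a nonzero multiple
`r • x ∈ span R S`. As `R^ι` is torsion-free, `x ↦ (r, coefficients of r • x)` injects `R^ι`
into `R × (S →₀ R)`, so `#(R^ι) ≤ max #S #R` once `S` is infinite. Conversely `#S` is the rank
of `R^ι`, because the quotient by `span R S` is torsion, and the geometric sequences `(t ^ n)ₙ`,
being distinct characters of `ℕ`, are `#R` independent vectors; hence `#R ≤ #S`.
-/

universe u v

open Cardinal Submodule Function

section MaximalLinearIndependent

variable {R M : Type*} [AddCommGroup M]

theorem Maximal.exists_ne_zero_smul_mem_span [Ring R] [Nontrivial R] [Module R M]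
    {S : Set M} (hS : Maximal (LinearIndepOn R id) S) (x : M) :
    ∃ r : R, r ≠ 0 ∧ r • x ∈ span R S := by
  by_contra! h
  have hind : LinearIndepOn R id (insert x S) :=
    hS.prop.id_insert' fun r hr => by_contra fun hr0 => h r hr0 hr
  have hx : x ∈ S := hS.eq_of_subset hind (Set.subset_insert x S) ▸ Set.mem_insert x S
  exact h 1 one_ne_zero (by simpa using subset_span hx)

theorem exists_injective_prod_finsupp_of_forall_smul_mem_span [Ring R] [IsCancelMulZero R]
    [Module R M] [Module.IsTorsionFree R M] {S : Set M}
    (h : ∀ x : M, ∃ r : R, r ≠ 0 ∧ r • x ∈ span R S) :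
    ∃ f : M → R × (S →₀ R), Injective f := by
  choose r hr hspan using h
  choose c hc using fun x => (Finsupp.mem_span_iff_linearCombination R S _).mp (hspan x)
  refine ⟨fun x => (r x, c x), fun x y hxy => ?_⟩
  obtain ⟨hr_eq, hc_eq⟩ : r x = r y ∧ c x = c y := Prod.ext_iff.mp hxy
  apply smul_right_injective M (hr x)
  change r x • x = r x • y
  rw [← hc x, hc_eq, hc y, hr_eq]

theorem Maximal.cardinalMk_eq_rank [CommRing R] [IsDomain R] [Module R M] {S : Set M}
    (hS : Maximal (LinearIndepOn R id) S) : #S = Module.rank R M := by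
  have htorsion : Module.IsTorsion R (M ⧸ span R S) := by
    rintro ⟨x⟩
    obtain ⟨r, hr, hrx⟩ := hS.exists_ne_zero_smul_mem_span x
    exact ⟨⟨r, mem_nonZeroDivisors_of_ne_zero hr⟩,
      (Quotient.mk_eq_zero (span R S)).mpr hrx⟩
  rw [← rank_quotient_add_rank_of_isDomain (span R S), htorsion.rank_eq_zero, zero_add,
    rank_span_set hS.prop]

end MaximalLinearIndependent

theorem lift_cardinalMk_le_rank_fun (R : Type u) [CommRing R] [IsDomain R] (ι : Type v)
    [Infinite ι] : lift.{v} #R ≤ Module.rank R (ι → R) := by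
  let g : ι → Multiplicative ℕ := invFun (Infinite.natEmbedding ι)
  have hg : Surjective g := invFun_surjective (Infinite.natEmbedding ι).injective
  have hpow : LinearIndependent R fun t : R => ⇑(powersHom R t) :=
    (linearIndependent_monoidHom (Multiplicative ℕ) R).comp _ (powersHom R).injective
  have := (hpow.map' _ (LinearMap.ker_eq_bot.mpr
    (LinearMap.funLeft_injective_of_surjective R R g hg))).cardinal_lift_le_rank
  rwa [lift_umax.{u, v}, lift_id'.{u, v}] at this

/-- Let `R` be a commutative integral domain and `ι` an infinite index
set. Then every maximal `R`-linearly independent subset `S` of `R^ι` has cardinality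
`card S = card (R^ι)`. (Equivalently, the Lazarus dimension, and hence the Goldie
dimension, of `R^ι` equals its cardinality.) -/
theorem mk_maxLinearIndependent_eq_mk_pi (R : Type u) [CommRing R] [IsDomain R]
    (ι : Type u) [Infinite ι] (S : Set (ι → R))
    (hS : LinearIndependent R ((↑) : S → (ι → R)))
    (hmax : ∀ T : Set (ι → R), S ⊆ T → LinearIndependent R ((↑) : T → (ι → R)) → T = S) :
    Cardinal.mk S = Cardinal.mk (ι → R) := by
  have hS_max : Maximal (LinearIndepOn R id) S := ⟨hS, fun T hT hST => (hmax T hST hT).le⟩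
  have hRS : #R ≤ #S := by
    simpa [hS_max.cardinalMk_eq_rank] using lift_cardinalMk_le_rank_fun R ι
  obtain ⟨f, hf⟩ := exists_injective_prod_finsupp_of_forall_smul_mem_span
    hS_max.exists_ne_zero_smul_mem_span
  have : Infinite S := by
    by_contra hS_fin
    rw [not_infinite_iff_finite] at hS_fin
    have := lt_aleph0_iff_finite.mp (hRS.trans_lt (lt_aleph0_of_finite S))
    have : Finite (ι → R) := Finite.of_injective (Prod.map id DFunLike.coe ∘ f)
      ((injective_id.prodMap DFunLike.coe_injective).comp hf)
    exact not_finite (ι → R)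
  refine le_antisymm (mk_set_le S) ?_
  calc #(ι → R) ≤ #(R × (S →₀ R)) := mk_le_of_injective hf
    _ = #R * max #S #R := by rw [mk_prod, lift_id, lift_id, mk_finsupp_of_infinite]
    _ = #S := by rw [max_eq_left hRS, mul_eq_right (aleph0_le_mk S) hRS (mk_ne_zero R)]
end
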